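/- Let (Lᵢ)_{i≥1} be a sequence of ∼-classes (in the monoid 𝒬 = Σ⁺/∼ ⊎ {[ε]}) and let P be the set of all (finite or infinite) words of the form w₁w₂w₃⋯ with wᵢ ∈ Lᵢ. Then there exist classes U, V ∈ 𝒬 with UV = U and VV = V such that P ⊆ UV^ω. -/

import Mathlib

variable {Q : Type*} {A : Type*}

/-- Reachability in a nondeterministic automaton: `q` is reachable from `p` reading `w`. -/
def Reach (δ : Q → A → Set Q) : Q → List A → Q → Prop
  | p, [], q => p = q
  | p, a :: w, q => ∃ r ∈ δ p a, Reach δ r w q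

/-- Reachability visiting some final state along the way (possibly the endpoints). -/
def ReachF (δ : Q → A → Set Q) (Fs : Set Q) (p : Q) (w : List A) (q : Q) : Prop :=
  ∃ u v r, w = u ++ v ∧ r ∈ Fs ∧ Reach δ p u r ∧ Reach δ r v q

/-- The relation ∼ : `w ∼ u` iff for all states `p q`, reachability and
reachability-through-final-states via `w` and via `u` coincide. -/
def Sim (δ : Q → A → Set Q) (Fs : Set Q) (w u : List A) : Prop :=
  ∀ p q : Q, (Reach δ p w q ↔ Reach δ p u q) ∧ (ReachF δ Fs p w q ↔ ReachF δ Fs p u q)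

/-- The class of a word in 𝒬 = Σ⁺/∼ ⊎ {[ε]} : for a nonempty word its ∼-class,
and `[ε] = {ε}` for the empty word. -/
def wordClass (δ : Q → A → Set Q) (Fs : Set Q) (w : List A) : Set (List A) :=
  {u | (w = [] ∧ u = []) ∨ (w ≠ [] ∧ u ≠ [] ∧ Sim δ Fs w u)}

/-- `C` is an element of 𝒬. -/
def IsClass (δ : Q → A → Set Q) (Fs : Set Q) (C : Set (List A)) : Prop :=
  ∃ w : List A, C = wordClass δ Fs w

/-- Elementwise concatenation of languages of finite words. -/
def mulSet (L M : Set (List A)) : Set (List A) := Set.image2 (· ++ ·) L M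

/-- Monoid multiplication of classes: the class of the concatenation of representatives. -/
def classMul (δ : Q → A → Set Q) (Fs : Set Q) (C D : Set (List A)) : Set (List A) :=
  {v | ∃ w ∈ C, ∃ u ∈ D, v ∈ wordClass δ Fs (w ++ u)}

/-- Finite star of a language. -/
def starSet (L : Set (List A)) : Set (List A) :=
  {w | ∃ l : List (List A), (∀ u ∈ l, u ∈ L) ∧ w = l.flatten}

/-- Possibly infinite words over `A` : Σ^{≤ω}, as stable `Option`-valued streams. -/
def Word (A : Type*) : Type _ := {g : ℕ → Option A // ∀ n, g n = none → g (n + 1) = none}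

/-- A finite word as an element of Σ^{≤ω}. -/
def ofList (w : List A) : Word A :=
  ⟨fun n => w[n]?, fun n h => by
    rw [List.getElem?_eq_none_iff] at *
    omega⟩

/-- An infinite word as an element of Σ^{≤ω}. -/
def ofStream (s : ℕ → A) : Word A := ⟨fun n => some (s n), fun n h => by simp at h⟩

/- The (possibly infinite) concatenation `f 0 · f 1 · f 2 ⋯` of a sequence of finite
words, as an element of Σ^{≤ω}. -/
open Classical in
noncomputable def prodWord (f : ℕ → List A) : Word A :=
  ⟨fun n =>
    if h : ∃ k, n < ((List.range k).flatMap f).length then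
      ((List.range h.choose).flatMap f)[n]?
    else none, by
    intro n hn
    dsimp only at hn ⊢
    by_cases h : ∃ k, n < ((List.range k).flatMap f).length
    · exfalso
      rw [dif_pos h, List.getElem?_eq_none_iff] at hn
      have := h.choose_spec
      omega
    · have h2 : ¬ ∃ k, n + 1 < ((List.range k).flatMap f).length := by
        push_neg at h ⊢
        intro k
        have := h k
        omega
      rw [dif_neg h2]⟩

/-- Concatenation of a finite word with a possibly infinite word. -/
def catWord (u : List A) (w : Word A) : Word A :=
  ⟨fun n => if n < u.length then u[n]? else w.1 (n - u.length), by
    intro n hn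
    dsimp only at hn ⊢
    by_cases h : n < u.length
    · exfalso
      rw [if_pos h, List.getElem?_eq_none_iff] at hn
      omega
    · rw [if_neg h] at hn
      have h2 : ¬ n + 1 < u.length := by omega
      rw [if_neg h2]
      have h3 : n + 1 - u.length = (n - u.length) + 1 := by omega
      rw [h3]
      exact w.2 _ hn⟩

/-- `CD^ω` : all words `w₀w₁w₂⋯` with `w₀ ∈ C` and `wᵢ ∈ D` for `i ≥ 1`. -/
def omegaProd (C D : Set (List A)) : Set (Word A) :=
  {w | ∃ f : ℕ → List A, f 0 ∈ C ∧ (∀ i, 1 ≤ i → f i ∈ D) ∧ w = prodWord f}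

/-- `L^ω` : all words `w₁w₂w₃⋯` with all `wᵢ ∈ L`. -/
def omegaPow (L : Set (List A)) : Set (Word A) :=
  {w | ∃ f : ℕ → List A, (∀ i, f i ∈ L) ∧ w = prodWord f}

/-- Acceptance of a finite word (as an NFA). -/
def NFAAccepts (δ : Q → A → Set Q) (q0 : Q) (Fs : Set Q) (w : List A) : Prop :=
  ∃ q ∈ Fs, Reach δ q0 w q

/-- Büchi acceptance of an infinite word: a run from `q0` visiting `Fs` infinitely often. -/
def BuchiAccepts (δ : Q → A → Set Q) (q0 : Q) (Fs : Set Q) (s : ℕ → A) : Prop :=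
  ∃ r : ℕ → Q, r 0 = q0 ∧ (∀ n, r (n + 1) ∈ δ (r n) (s n)) ∧ {n | r n ∈ Fs}.Infinite

/-- The language `L(𝔄) ⊆ Σ^{≤ω}` of the extended Büchi automaton: finite words accepted
as an NFA together with infinite words accepted as a Büchi automaton. -/
def LangOf (δ : Q → A → Set Q) (q0 : Q) (Fs : Set Q) : Set (Word A) :=
  {w | (∃ l : List A, w = ofList l ∧ NFAAccepts δ q0 Fs l) ∨
       (∃ s : ℕ → A, w = ofStream s ∧ BuchiAccepts δ q0 Fs s)}

/-- The set 𝒬 of classes, as a type. -/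
def QClass (δ : Q → A → Set Q) (Fs : Set Q) : Type _ := {C : Set (List A) // IsClass δ Fs C}

/-- The set 𝓒 of pairs `(C, D)` of classes with `CD = C` and `DD = D`, as a type. -/
def CPair (δ : Q → A → Set Q) (Fs : Set Q) : Type _ :=
  {p : Set (List A) × Set (List A) //
    IsClass δ Fs p.1 ∧ IsClass δ Fs p.2 ∧
    classMul δ Fs p.1 p.2 = p.1 ∧ classMul δ Fs p.2 p.2 = p.2}

/-- The language `CD^ω` denoted by an element of 𝓒. -/
def concPair {δ : Q → A → Set Q} {Fs : Set Q} (p : CPair δ Fs) : Set (Word A) :=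
  omegaProd p.1.1 p.1.2

/-- A subset 𝒱 ⊆ 𝓒 is closed: whenever `UV^ω ∩ CD^ω ≠ ∅` for `(C,D) ∈ 𝒱` and
`(U,V) ∈ 𝓒`, then `(U,V) ∈ 𝒱`. -/
def IsClosedC {δ : Q → A → Set Q} {Fs : Set Q} (𝒱 : Set (CPair δ Fs)) : Prop :=
  ∀ p ∈ 𝒱, ∀ q : CPair δ Fs, (concPair q ∩ concPair p).Nonempty → q ∈ 𝒱

/-- Pre-abstraction 𝔣. -/
def frakF (δ : Q → A → Set Q) (Fs : Set Q) (V : Set (Word A)) : Set (CPair δ Fs) :=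
  {p | (concPair p ∩ V).Nonempty}

/-- Pre-concretization 𝔤. -/
def frakG {δ : Q → A → Set Q} {Fs : Set Q} (𝒱 : Set (CPair δ Fs)) : Set (Word A) :=
  ⋃ p ∈ 𝒱, concPair p

/-- Closure 𝔠(𝒱) = ⋃_{n ≥ 1} (𝔣 ∘ 𝔤)ⁿ(𝒱). -/
def frakC {δ : Q → A → Set Q} {Fs : Set Q} (𝒱 : Set (CPair δ Fs)) : Set (CPair δ Fs) :=
  ⋃ n : ℕ, (fun 𝒲 => frakF δ Fs (frakG 𝒲))^[n + 1] 𝒱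

/-- Abstraction α_* -/
def alphaStar (δ : Q → A → Set Q) (Fs : Set Q) (U : Set (List A)) : Set (QClass δ Fs) :=
  {C | (C.1 ∩ U).Nonempty}

/-- Concretization γ_* -/
def gammaStar {δ : Q → A → Set Q} {Fs : Set Q} (𝒰 : Set (QClass δ Fs)) : Set (List A) :=
  ⋃ C ∈ 𝒰, C.1

/-- Abstraction α_{≤ω}. -/
def alphaOmega (δ : Q → A → Set Q) (Fs : Set Q) (V : Set (Word A)) : Set (CPair δ Fs) :=
  frakC (frakF δ Fs V)

/-- Concretization γ_{≤ω}. -/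
def gammaOmega {δ : Q → A → Set Q} {Fs : Set Q} (𝒱 : Set (CPair δ Fs)) : Set (Word A) :=
  frakG 𝒱

/-! Write `Lᵢ = [wᵢ]` and colour each pair `m < n` by the classes of `w₀⋯w_{m-1}` and of
`w_m⋯w_{n-1}`. A class is determined by finitely many reachability data of the automaton, so
Ramsey's theorem yields indices `φ 0 < φ 1 < ⋯` on which the colour is constant. Then
`U = [w₀⋯w_{φ 1 - 1}]` and `V = [w_{φ 0}⋯w_{φ 1 - 1}]` satisfy `UV = U` and `VV = V`, and
cutting a product `f 0 · f 1 ⋯` with `f i ∈ Lᵢ` at the positions `φ 1, φ 2, …` puts it in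
`UV^ω`, since `∼` is a congruence. -/

open Filter

theorem Ultrafilter.exists_eventually_eq {α C : Type*} [Finite C] (f : Ultrafilter α)
    (g : α → C) : ∃ v, ∀ᶠ x in (f : Filter α), g x = v :=
  eventually_exists_iff.1 (.of_forall fun x => ⟨g x, rfl⟩)

/-- Ramsey's theorem for pairs, for colourings of `ℕ` with finitely many colours. -/
theorem exists_strictMono_monochromatic {C : Type*} [Finite C] (c : ℕ → ℕ → C) :
    ∃ φ : ℕ → ℕ, StrictMono φ ∧ ∃ v, ∀ i j, i < j → c (φ i) (φ j) = v := by
  let 𝒰 := hyperfilter ℕ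
  have h𝒰 : ∀ m, ∀ᶠ n in (𝒰 : Filter ℕ), m < n := fun m =>
    hyperfilter_le_cofinite (Nat.cofinite_eq_atTop ▸ eventually_gt_atTop m)
  -- `col m` is the colour of almost all pairs `(m, n)`, "almost all" in the sense of `𝒰`
  choose col hcol using fun m => 𝒰.exists_eventually_eq (c m)
  obtain ⟨v, hv⟩ := 𝒰.exists_eventually_eq col
  obtain ⟨φ, -, hφ⟩ := exists_seq_of_forall_finset_exists (fun m => col m = v)
    (fun m n => m < n ∧ c m n = v) fun s hs => by
      have hnext : ∀ᶠ n in (𝒰 : Filter ℕ), ∀ m ∈ s, m < n ∧ c m n = v :=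
        (eventually_all_finset s).2 fun m hm => (h𝒰 m).and (hs m hm ▸ hcol m)
      exact (hv.and hnext).exists
  exact ⟨φ, strictMono_nat_of_lt_succ fun n => (hφ n (n + 1) n.lt_succ_self).1, v,
    fun i j hij => (hφ i j hij).2⟩

section Automaton

variable (δ : Q → A → Set Q) (Fs : Set Q)

theorem reach_append (p q : Q) (u v : List A) :
    Reach δ p (u ++ v) q ↔ ∃ r, Reach δ p u r ∧ Reach δ r v q := by
  induction u generalizing p with
  | nil => simp [Reach]
  | cons a u ih =>
    simp only [List.cons_append, Reach, ih]
    exact ⟨fun ⟨r, hr, s, hs⟩ => ⟨s, ⟨r, hr, hs.1⟩, hs.2⟩,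
      fun ⟨s, ⟨r, hr, hs⟩, hsq⟩ => ⟨r, hr, s, hs, hsq⟩⟩

theorem reachF_append (p q : Q) (u v : List A) :
    ReachF δ Fs p (u ++ v) q ↔
      (∃ r, ReachF δ Fs p u r ∧ Reach δ r v q) ∨ (∃ r, Reach δ p u r ∧ ReachF δ Fs r v q) := by
  constructor
  · rintro ⟨x, y, r, hxy, hr, hx, hy⟩
    rcases List.append_eq_append_iff.mp hxy with ⟨m, rfl, rfl⟩ | ⟨m, rfl, rfl⟩
    · obtain ⟨s, hu, hm⟩ := (reach_append δ p r u m).mp hx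
      exact Or.inr ⟨s, hu, m, y, r, rfl, hr, hm, hy⟩
    · obtain ⟨s, hm, hv⟩ := (reach_append δ r q m v).mp hy
      exact Or.inl ⟨s, ⟨x, m, r, rfl, hr, hx, hm⟩, hv⟩
  · rintro (⟨r, ⟨x, y, s, rfl, hs, hx, hy⟩, hv⟩ | ⟨r, hu, ⟨x, y, s, rfl, hs, hx, hy⟩⟩)
    · exact ⟨x, y ++ v, s, by simp, hs, hx, (reach_append δ s q y v).mpr ⟨r, hy, hv⟩⟩
    · exact ⟨u ++ x, y, s, by simp, hs, (reach_append δ p s u x).mpr ⟨r, hu, hx⟩, hy⟩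

-- The first component separates the adjoined unit class `[ε] = {ε}` from the others.
def reachData (w : List A) : Prop × Set (Q × Q) × Set (Q × Q) :=
  (w = [], {pq | Reach δ pq.1 w pq.2}, {pq | ReachF δ Fs pq.1 w pq.2})

theorem reachData_append {u u' v v' : List A} (hu : reachData δ Fs u = reachData δ Fs u')
    (hv : reachData δ Fs v = reachData δ Fs v') :
    reachData δ Fs (u ++ v) = reachData δ Fs (u' ++ v') := by
  simp only [reachData, Prod.mk.injEq, Set.ext_iff, Set.mem_ofPred_eq, Prod.forall] at hu hv ⊢
  refine ⟨by simp only [List.append_eq_nil_iff, hu.1, hv.1], fun p q => ?_, fun p q => ?_⟩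
  · simp only [reach_append, hu.2.1, hv.2.1]
  · simp only [reachF_append, hu.2.1, hu.2.2, hv.2.1, hv.2.2]

theorem mem_wordClass_iff {u w : List A} :
    u ∈ wordClass δ Fs w ↔ reachData δ Fs u = reachData δ Fs w := by
  simp only [wordClass, Sim, reachData, Set.mem_ofPred_eq, Prod.mk.injEq, Set.ext_iff,
    Prod.forall]
  rcases eq_or_ne w [] with rfl | hw <;> rcases eq_or_ne u [] with rfl | hu
  all_goals simp_all [Iff.comm, forall_and]

theorem wordClass_eq_iff {u w : List A} :
    wordClass δ Fs u = wordClass δ Fs w ↔ reachData δ Fs u = reachData δ Fs w :=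
  ⟨fun h => (mem_wordClass_iff δ Fs).1 (h ▸ (mem_wordClass_iff δ Fs).2 rfl),
    fun h => Set.ext fun x => by simp only [mem_wordClass_iff, h]⟩

theorem flatMap_mem_wordClass {ι : Type*} (l : List ι) {f w : ι → List A}
    (h : ∀ i, f i ∈ wordClass δ Fs (w i)) : l.flatMap f ∈ wordClass δ Fs (l.flatMap w) := by
  simp only [mem_wordClass_iff] at h ⊢
  induction l with
  | nil => rfl
  | cons i l ih => simpa only [List.flatMap_cons] using reachData_append δ Fs (h i) ih

theorem classMul_wordClass (u v : List A) :
    classMul δ Fs (wordClass δ Fs u) (wordClass δ Fs v) = wordClass δ Fs (u ++ v) := by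
  ext x
  simp only [classMul, mem_wordClass_iff]
  exact ⟨fun ⟨u', hu, v', hv, hx⟩ => hx.trans (reachData_append δ Fs hu hv),
    fun hx => ⟨u, rfl, v, rfl, hx⟩⟩

theorem classMul_wordClass_flatMap_Ico (w : ℕ → List A) {a b c : ℕ} (hab : a ≤ b)
    (hbc : b ≤ c) :
    classMul δ Fs (wordClass δ Fs ((List.Ico a b).flatMap w))
        (wordClass δ Fs ((List.Ico b c).flatMap w)) =
      wordClass δ Fs ((List.Ico a c).flatMap w) := by
  rw [classMul_wordClass, ← List.flatMap_append, List.Ico.append_consecutive hab hbc]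

end Automaton

theorem flatMap_range_prefix (f : ℕ → List A) {k k' : ℕ} (h : k ≤ k') :
    (List.range k).flatMap f <+: (List.range k').flatMap f :=
  ⟨(List.Ico k k').flatMap f, by
    rw [← List.flatMap_append, ← List.Ico.zero_bot, ← List.Ico.zero_bot,
      List.Ico.append_consecutive k.zero_le h]⟩

theorem prodWord_apply_of_lt (f : ℕ → List A) {n k : ℕ}
    (h : n < ((List.range k).flatMap f).length) :
    (prodWord f).1 n = ((List.range k).flatMap f)[n]? := by
  have hex : ∃ k, n < ((List.range k).flatMap f).length := ⟨k, h⟩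
  simp only [prodWord]
  rw [dif_pos hex]
  rcases le_total hex.choose k with hk | hk
  · obtain ⟨t, ht⟩ := flatMap_range_prefix f hk
    rw [← ht, List.getElem?_append_left hex.choose_spec]
  · obtain ⟨t, ht⟩ := flatMap_range_prefix f hk
    rw [← ht, List.getElem?_append_left h]

theorem prodWord_apply_of_forall_le (f : ℕ → List A) {n : ℕ}
    (h : ∀ k, ((List.range k).flatMap f).length ≤ n) : (prodWord f).1 n = none := by
  simp only [prodWord]
  rw [dif_neg (by simpa using h)]

theorem prodWord_flatMap_Ico (f : ℕ → List A) {b : ℕ → ℕ} (hb0 : b 0 = 0)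
    (hb : StrictMono b) :
    prodWord (fun k => (List.Ico (b k) (b (k + 1))).flatMap f) = prodWord f := by
  have hpre : ∀ k, (List.range k).flatMap (fun k => (List.Ico (b k) (b (k + 1))).flatMap f) =
      (List.range (b k)).flatMap f := by
    intro k
    induction k with
    | zero => simp [hb0]
    | succ k ih =>
      rw [List.range_succ, List.flatMap_append, ih, List.flatMap_singleton,
        ← List.flatMap_append, ← List.Ico.zero_bot, ← List.Ico.zero_bot,
        List.Ico.append_consecutive (Nat.zero_le _) (hb k.lt_succ_self).le]
  refine Subtype.ext (funext fun n => ?_)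
  by_cases h : ∃ k, n < ((List.range k).flatMap f).length
  · obtain ⟨k, hk⟩ := h
    have hk' : n < ((List.range (b k)).flatMap f).length :=
      hk.trans_le (flatMap_range_prefix f hb.le_apply).length_le
    rw [prodWord_apply_of_lt _ (hpre k ▸ hk'), hpre, prodWord_apply_of_lt f hk']
  · push Not at h
    rw [prodWord_apply_of_forall_le f h, prodWord_apply_of_forall_le _ fun k => hpre k ▸ h _]

theorem prod_of_classes_covered_general {Q A : Type*} [Finite Q]
    (δ : Q → A → Set Q) (Fs : Set Q) (L : ℕ → Set (List A))
    (hL : ∀ i, IsClass δ Fs (L i)) :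
    ∃ U V : Set (List A), IsClass δ Fs U ∧ IsClass δ Fs V ∧
      classMul δ Fs U V = U ∧ classMul δ Fs V V = V ∧
      {w : Word A | ∃ f : ℕ → List A, (∀ i, f i ∈ L i) ∧ w = prodWord f} ⊆
        omegaProd U V := by
  choose w hw using hL
  obtain ⟨φ, hφ, d, hd⟩ := exists_strictMono_monochromatic fun m n =>
    (reachData δ Fs ((List.Ico 0 m).flatMap w), reachData δ Fs ((List.Ico m n).flatMap w))
  set U := wordClass δ Fs ((List.Ico 0 (φ 1)).flatMap w)
  set V := wordClass δ Fs ((List.Ico (φ 0) (φ 1)).flatMap w)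
  have hU (i : ℕ) : wordClass δ Fs ((List.Ico 0 (φ i)).flatMap w) = U :=
    (wordClass_eq_iff δ Fs).2 (congrArg Prod.fst ((hd i (i + 1) i.lt_succ_self).trans
      (hd 1 2 one_lt_two).symm))
  have hV {i j : ℕ} (hij : i < j) : wordClass δ Fs ((List.Ico (φ i) (φ j)).flatMap w) = V :=
    (wordClass_eq_iff δ Fs).2 (congrArg Prod.snd ((hd i j hij).trans (hd 0 1 one_pos).symm))
  refine ⟨U, V, ⟨_, rfl⟩, ⟨_, rfl⟩, ?_, ?_, ?_⟩
  · rw [← hV (i := 1) (j := 2) one_lt_two, classMul_wordClass_flatMap_Ico δ Fs w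
      (Nat.zero_le _) (hφ one_lt_two).le, hU]
  · nth_rewrite 2 [← hV (i := 1) (j := 2) one_lt_two]
    rw [classMul_wordClass_flatMap_Ico δ Fs w (hφ zero_lt_one).le (hφ one_lt_two).le, hV two_pos]
  · rintro _ ⟨f, hf, rfl⟩
    have hf' (i : ℕ) : f i ∈ wordClass δ Fs (w i) := hw i ▸ hf i
    let b : ℕ → ℕ := fun | 0 => 0 | k + 1 => φ (k + 1)
    have hb : StrictMono b := strictMono_nat_of_lt_succ fun
      | 0 => (Nat.zero_le _).trans_lt (hφ zero_lt_one)
      | k + 1 => hφ (k + 1).lt_succ_self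
    refine ⟨fun k => (List.Ico (b k) (b (k + 1))).flatMap f, flatMap_mem_wordClass δ Fs _ hf',
      fun i hi => ?_, (prodWord_flatMap_Ico f rfl hb).symm⟩
    obtain ⟨k, rfl⟩ := Nat.exists_eq_add_of_le' hi
    exact hV (k + 1).lt_succ_self ▸ flatMap_mem_wordClass δ Fs _ hf'

/-- Lemma 6, `krit`: if `(Lᵢ)` is a sequence of classes and `P` is the
set of all (finite or infinite) products `w₁w₂w₃⋯` with `wᵢ ∈ Lᵢ`, then there are
classes `U, V` with `UV = U`, `VV = V` and `P ⊆ UV^ω`. -/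
theorem prod_of_classes_covered {Q A : Type*} [Finite Q] [Finite A]
    (δ : Q → A → Set Q) (Fs : Set Q) (L : ℕ → Set (List A))
    (hL : ∀ i, IsClass δ Fs (L i)) :
    ∃ U V : Set (List A), IsClass δ Fs U ∧ IsClass δ Fs V ∧
      classMul δ Fs U V = U ∧ classMul δ Fs V V = V ∧
      {w : Word A | ∃ f : ℕ → List A, (∀ i, f i ∈ L i) ∧ w = prodWord f} ⊆
        omegaProd U V :=
  prod_of_classes_covered_general δ Fs L hL
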